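/- arXiv:1003.5857 — 3 statements merged into one kernel-verified Lean document; each statement's English description precedes it below -/
import Mathlib

section
/- Let L be a finitely generated free ℤ-module of rank n > 1 with basis e₁,…,eₙ, let r be a positive integer and x ∈ L, and let l = gcd(r, x) (the gcd of r and all coordinates of x). Then there exists ξ ∈ L such that (x + r·ξ)/l is a primitive element of L (i.e., l divides x + r·ξ and the quotient element generates a direct summand, equivalently L/(ℤ·((x+r·ξ)/l)) is torsion free). -/
/-- An element of the free `ℤ`-module `Fin n → ℤ` is *primitive* if the gcd of its
coordinates is `1`; equivalently, the quotient by the subgroup it generates is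
torsion free (it generates a direct summand). -/
def IsPrimitiveVec {n : ℕ} (y : Fin n → ℤ) : Prop :=
  Finset.univ.gcd y = 1

/-!
Dividing by `l` reduces to the case where no prime divides both `r` and all coordinates of `x`;
then only primes `p ∤ r` can divide every coordinate of `x + r • ξ`. Shifting the second
coordinate by a multiple of `r` makes it a nonzero integer `c`, and shifting the first one by
`r * t`, where `t` is the product of the primes dividing `c` but not `x₀`, leaves no prime
`p ∤ r` dividing both of them.
-/

lemma Int.eq_one_iff_forall_prime_not_dvd {g : ℤ} (hg : 0 ≤ g) :
    g = 1 ↔ ∀ p : ℕ, p.Prime → ¬ (p : ℤ) ∣ g := by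
  simp only [Int.natCast_dvd, ← Nat.eq_one_iff_not_exists_prime_dvd]
  omega

lemma isPrimitiveVec_iff {n : ℕ} {y : Fin n → ℤ} :
    IsPrimitiveVec y ↔ ∀ p : ℕ, p.Prime → ∃ i, ¬ (p : ℤ) ∣ y i := by
  rw [IsPrimitiveVec,
    Int.eq_one_iff_forall_prime_not_dvd (Int.nonneg_of_normalize_eq_self Finset.normalize_gcd)]
  simp [Finset.dvd_gcd_iff]

lemma Int.exists_forall_prime_dvd_add_mul_imp_dvd (a m c : ℤ) (hc : c ≠ 0) :
    ∃ t : ℤ, ∀ p : ℕ, p.Prime → (p : ℤ) ∣ c → (p : ℤ) ∣ a + m * t → (p : ℤ) ∣ m := by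
  classical
  set t : ℤ := ∏ q ∈ c.natAbs.primeFactors.filter (fun q : ℕ => ¬ (q : ℤ) ∣ a), (q : ℤ)
  have hdvd_t : ∀ p : ℕ, p.Prime → (p : ℤ) ∣ c → ((p : ℤ) ∣ t ↔ ¬ (p : ℤ) ∣ a) := by
    intro p hp hpc
    rw [(Nat.prime_iff_prime_int.mp hp).dvd_finsetProd_iff]
    constructor
    · rintro ⟨q, hq, hpq⟩
      rw [Finset.mem_filter, Nat.mem_primeFactors] at hq
      rw [(Nat.prime_dvd_prime_iff_eq hp hq.1.1).1 (Int.natCast_dvd_natCast.1 hpq)]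
      exact hq.2
    · intro hpa
      exact ⟨p, Finset.mem_filter.2 ⟨Nat.mem_primeFactors.2
        ⟨hp, Int.natCast_dvd.1 hpc, Int.natAbs_ne_zero.2 hc⟩, hpa⟩, dvd_rfl⟩
  refine ⟨t, fun p hp hpc hp_sum => ?_⟩
  by_cases hpa : (p : ℤ) ∣ a
  · rcases (Nat.prime_iff_prime_int.mp hp).dvd_mul.1 ((dvd_add_right hpa).1 hp_sum) with hpm | hpt
    · exact hpm
    · exact absurd hpa ((hdvd_t p hp hpc).1 hpt)
  · have hpt := (hdvd_t p hp hpc).2 hpa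
    exact absurd ((dvd_add_left (hpt.mul_left m)).1 hp_sum) hpa

lemma exists_isPrimitiveVec_add_mul {n : ℕ} (hn : 1 < n) {r : ℤ} (hr : r ≠ 0) {x : Fin n → ℤ}
    (hx : ∀ p : ℕ, p.Prime → (p : ℤ) ∣ r → ∃ i, ¬ (p : ℤ) ∣ x i) :
    ∃ ξ : Fin n → ℤ, IsPrimitiveVec fun i => x i + r * ξ i := by
  set i₀ : Fin n := ⟨0, by omega⟩
  set i₁ : Fin n := ⟨1, hn⟩
  have hi₁₀ : i₁ ≠ i₀ := by simp [i₀, i₁, Fin.ext_iff]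
  obtain ⟨s, hs⟩ : ∃ s, x i₁ + r * s ≠ 0 := by
    by_cases h : x i₁ = 0
    · exact ⟨1, by simpa [h] using hr⟩
    · exact ⟨0, by simpa using h⟩
  obtain ⟨t, ht⟩ := Int.exists_forall_prime_dvd_add_mul_imp_dvd (x i₀) r _ hs
  refine ⟨Pi.single i₀ t + Pi.single i₁ s, isPrimitiveVec_iff.2 fun p hp => ?_⟩
  by_cases hpr : (p : ℤ) ∣ r
  · obtain ⟨i, hpx⟩ := hx p hp hpr
    exact ⟨i, fun h => hpx ((dvd_add_left (hpr.mul_right _)).1 h)⟩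
  · by_contra! hall
    exact hpr (ht p hp (by simpa [hi₁₀] using hall i₁) (by simpa [hi₁₀.symm] using hall i₀))

/-- Let `L` be a finitely generated free `ℤ`-module of rank `n > 1`, `r` a positive
integer, `x ∈ L` and `l = gcd(r, x)`.  Then there exists `ξ ∈ L` such that
`(x + r·ξ)/l` is a primitive element of `L`. -/
theorem stmt0 {n : ℕ} (hn : 1 < n) (r : ℤ) (hr : 0 < r) (x : Fin n → ℤ)
    (l : ℤ) (hl : l = gcd r (Finset.univ.gcd x)) :
    ∃ ξ y : Fin n → ℤ, (∀ i, x i + r * ξ i = l * y i) ∧ IsPrimitiveVec y := by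
  have hl0 : l ≠ 0 := by
    rw [hl]
    exact fun h => hr.ne' ((gcd_eq_zero_iff _ _).1 h).1
  have hlx : l ∣ Finset.univ.gcd x := hl ▸ gcd_dvd_right _ _
  obtain ⟨r', rfl⟩ : l ∣ r := hl ▸ gcd_dvd_left _ _
  choose x' hx' using fun i => hlx.trans (Finset.gcd_dvd (Finset.mem_univ i))
  have hcop : ∀ p : ℕ, p.Prime → (p : ℤ) ∣ r' → ∃ i, ¬ (p : ℤ) ∣ x' i := by
    intro p hp hpr
    by_contra! hpx
    have hlp : l * p ∣ l * 1 := by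
      conv_rhs => rw [mul_one, hl]
      exact GCDMonoid.dvd_gcd (mul_dvd_mul_left l hpr)
        (Finset.dvd_gcd fun i _ => hx' i ▸ mul_dvd_mul_left l (hpx i))
    exact hp.not_dvd_one (by exact_mod_cast (mul_dvd_mul_iff_left hl0).1 hlp)
  obtain ⟨ξ, hξ⟩ := exists_isPrimitiveVec_add_mul hn (right_ne_zero_of_mul hr.ne') hcop
  exact ⟨ξ, _, fun i => by rw [hx' i]; ring, hξ⟩
end

section
/- Let r, c₁, s be data of a Mukai vector v = r + c₁ - (s/2)ρ on an Enriques surface, so that r, s are integers, c₁ lies in a unimodular even lattice N of rank 10, and r + (c₁·c₁) + s ≡ 0 mod 2 (equivalently c₂ := (r + c₁² + s)/2 is an integer). If v is primitive (not divisible by any prime in the Mukai lattice ℤ ⊕ N ⊕ (1/2)ℤρ, where divisibility by p means r = p·r', c₁ = p·c₁', and s/2 = p·s'' for a valid Mukai vector), then g := gcd(r, c₁, s) equals 1 or 2; moreover if g = 2 then c₂ is odd and r + s ≡ 2 mod 4. -/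
/-!
Write `Q x = x ⬝ᵥ B x` for the even form. If a prime `p` divides `r`, `s` and `c₁`, say
`r = p r'`, `s = p s'`, `c₁ = p c₁'`, primitivity says that `r' + Q c₁' + s'` is odd, i.e.
`r' + s'` is odd. On the other hand `r + s = 2 c₂ - Q c₁` is even, so `p (r' + s')` is even
and `p = 2`; and if `4` divided `g`, then `r'` and `s'` would both be even. Hence `g` is a
power of `2` not divisible by `4`. For `g = 2` we get `r + s = 2 (r' + s') ≡ 2 mod 4` and
`c₂ = r' + s' + 2 Q c₁'`, which is odd.
-/

open Matrix

namespace Mukai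

variable {ι : Type*} [Fintype ι] {B : Matrix ι ι ℤ} {r s c2 : ℤ} {c1 : ι → ℤ}

def IsPrimitive (B : Matrix ι ι ℤ) (r s : ℤ) (c1 : ι → ℤ) : Prop :=
  ∀ p : ℕ, p.Prime → ¬ ∃ (r' s' : ℤ) (c1' : ι → ℤ),
    r = (p : ℤ) * r' ∧ s = (p : ℤ) * s' ∧ c1 = (p : ℤ) • c1' ∧
    (2 : ℤ) ∣ (r' + c1' ⬝ᵥ B.mulVec c1' + s')

lemma smul_dotProduct_mulVec_smul (a : ℤ) (x : ι → ℤ) :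
    (a • x) ⬝ᵥ B.mulVec (a • x) = a * a * (x ⬝ᵥ B.mulVec x) := by
  rw [mulVec_smul, smul_dotProduct, dotProduct_smul, smul_eq_mul, smul_eq_mul, mul_assoc]

lemma even_add_of_even_form (heven : ∀ v : ι → ℤ, 2 ∣ v ⬝ᵥ B.mulVec v)
    (hc2 : r + c1 ⬝ᵥ B.mulVec c1 + s = 2 * c2) : Even (r + s) := by
  obtain ⟨q, hq⟩ := heven c1
  exact ⟨c2 - q, by linarith⟩

variable (heven : ∀ v : ι → ℤ, 2 ∣ v ⬝ᵥ B.mulVec v) (hprim : IsPrimitive B r s c1)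
include heven hprim

lemma IsPrimitive.exists_odd_add {p : ℕ} (hp : p.Prime)
    (hr : (p : ℤ) ∣ r) (hs : (p : ℤ) ∣ s) (hc : ∀ i, (p : ℤ) ∣ c1 i) :
    ∃ (r' s' : ℤ) (c1' : ι → ℤ),
      r = p * r' ∧ s = p * s' ∧ c1 = (p : ℤ) • c1' ∧ Odd (r' + s') := by
  obtain ⟨r', hr'⟩ := hr
  obtain ⟨s', hs'⟩ := hs
  choose c1' hc1' using hc
  have hc1 : c1 = (p : ℤ) • c1' := funext fun i => by simpa using hc1' i
  refine ⟨r', s', c1', hr', hs', hc1, Int.not_even_iff_odd.mp fun hrs => ?_⟩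
  have hsum : Even (r' + c1' ⬝ᵥ B.mulVec c1' + s') := by
    rw [add_right_comm]
    exact hrs.add (even_iff_two_dvd.mpr (heven c1'))
  exact hprim p hp ⟨r', s', c1', hr', hs', hc1, hsum.two_dvd⟩

lemma IsPrimitive.not_common_dvd_of_ne_two (hc2 : r + c1 ⬝ᵥ B.mulVec c1 + s = 2 * c2)
    {p : ℕ} (hp : p.Prime) (hp2 : p ≠ 2) :
    ¬ ((p : ℤ) ∣ r ∧ (p : ℤ) ∣ s ∧ ∀ i, (p : ℤ) ∣ c1 i) := by
  rintro ⟨hr, hs, hc⟩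
  obtain ⟨r', s', -, rfl, rfl, -, hodd⟩ := hprim.exists_odd_add heven hp hr hs hc
  have hpodd : Odd (p : ℤ) := by exact_mod_cast hp.odd_of_ne_two hp2
  have hprod : Even ((p : ℤ) * (r' + s')) := by
    rw [mul_add]; exact even_add_of_even_form heven hc2
  exact Int.not_even_iff_odd.mpr (hpodd.mul hodd) hprod

lemma IsPrimitive.not_common_dvd_four :
    ¬ ((4 : ℤ) ∣ r ∧ (4 : ℤ) ∣ s ∧ ∀ i, (4 : ℤ) ∣ c1 i) := by
  rintro ⟨⟨a, ha⟩, ⟨b, hb⟩, hc⟩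
  have h2 : (2 : ℤ) ∣ 4 := ⟨2, by norm_num⟩
  obtain ⟨r', s', -, hr', hs', -, hodd⟩ := hprim.exists_odd_add heven Nat.prime_two
    (h2.trans ⟨a, ha⟩) (h2.trans ⟨b, hb⟩) fun i => h2.trans (hc i)
  push_cast at hr' hs'
  exact Int.not_even_iff_odd.mpr hodd ⟨a + b, by linarith⟩

lemma IsPrimitive.odd_and_emod_four_of_common_dvd_two
    (hc2 : r + c1 ⬝ᵥ B.mulVec c1 + s = 2 * c2)
    (hr : (2 : ℤ) ∣ r) (hs : (2 : ℤ) ∣ s) (hc : ∀ i, (2 : ℤ) ∣ c1 i) :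
    Odd c2 ∧ (r + s) % 4 = 2 := by
  obtain ⟨r', s', c1', rfl, rfl, rfl, m, hm⟩ :=
    hprim.exists_odd_add heven Nat.prime_two hr hs hc
  push_cast at hc2 ⊢
  rw [smul_dotProduct_mulVec_smul] at hc2
  refine ⟨⟨m + c1' ⬝ᵥ B.mulVec c1', by linarith⟩, ?_⟩
  rw [show 2 * r' + 2 * s' = 4 * m + 2 by linarith]
  omega

end Mukai

lemma Int.eq_one_or_two_of_not_four_dvd {g : ℤ} (hg : 0 ≤ g) (h4 : ¬ (4 : ℤ) ∣ g)
    (hp : ∀ p : ℕ, p.Prime → (p : ℤ) ∣ g → p = 2) : g = 1 ∨ g = 2 := by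
  lift g to ℕ using hg
  have hg0 : g ≠ 0 := by rintro rfl; exact h4 (dvd_zero 4)
  have hpow := Nat.eq_prime_pow_of_unique_prime_dvd hg0 fun hq hqg =>
    hp _ hq (Int.natCast_dvd_natCast.mpr hqg)
  generalize g.primeFactorsList.length = k at hpow
  subst hpow
  have hk : k < 2 := by
    by_contra! hk
    exact h4 (by exact_mod_cast pow_dvd_pow 2 hk)
  interval_cases k <;> simp

theorem stmt3_general (B : Matrix (Fin 10) (Fin 10) ℤ)
    (heven : ∀ v : Fin 10 → ℤ, 2 ∣ v ⬝ᵥ B.mulVec v)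
    (r s c2 : ℤ) (c1 : Fin 10 → ℤ)
    (hc2 : r + c1 ⬝ᵥ B.mulVec c1 + s = 2 * c2)
    (hprim : ∀ p : ℕ, p.Prime →
      ¬ ∃ (r' s' : ℤ) (c1' : Fin 10 → ℤ),
        r = (p : ℤ) * r' ∧ s = (p : ℤ) * s' ∧ c1 = (p : ℤ) • c1' ∧
        (2 : ℤ) ∣ (r' + c1' ⬝ᵥ B.mulVec c1' + s'))
    (g : ℤ) (hg : g = gcd r (gcd s (Finset.univ.gcd c1))) :
    (g = 1 ∨ g = 2) ∧ (g = 2 → Odd c2 ∧ (r + s) % 4 = 2) := by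
  have hprim : Mukai.IsPrimitive B r s c1 := hprim
  have hdvd (d : ℤ) : d ∣ g ↔ d ∣ r ∧ d ∣ s ∧ ∀ i, d ∣ c1 i := by
    simp [hg, dvd_gcd_iff, Finset.dvd_gcd_iff]
  have hg12 : g = 1 ∨ g = 2 := by
    refine Int.eq_one_or_two_of_not_four_dvd (hg ▸ Int.coe_gcd _ _ ▸ Int.natCast_nonneg _)
      (fun h4 => hprim.not_common_dvd_four heven ((hdvd 4).mp h4)) fun p hp hpg => ?_
    by_contra hp2
    exact hprim.not_common_dvd_of_ne_two heven hc2 hp hp2 ((hdvd p).mp hpg)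
  refine ⟨hg12, fun hg2 => ?_⟩
  obtain ⟨hr, hs, hc⟩ := (hdvd 2).mp (hg2 ▸ dvd_rfl)
  exact hprim.odd_and_emod_four_of_common_dvd_two heven hc2 hr hs hc

/-- Let `v = r + c₁ - (s/2)ρ` be a Mukai vector on an Enriques surface: `r, s ∈ ℤ`,
`c₁` lies in the even unimodular lattice `N = H²(X,ℤ)_f` of rank `10`, and
`r + c₁² + s = 2c₂` for an integer `c₂`.  Suppose `v` is primitive: there is no prime
`p` with `r = p·r'`, `c₁ = p·c₁'`, `s = p·s'` such that `v' = r' + c₁' - (s'/2)ρ` is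
again a valid Mukai vector (i.e. `r' + c₁'² + s'` is even, so that `c₂'` is an
integer).  Then `g = gcd(r, c₁, s)` equals `1` or `2`; moreover if `g = 2` then `c₂`
is odd and `r + s ≡ 2 mod 4`. -/
theorem stmt3 (B : Matrix (Fin 10) (Fin 10) ℤ) (hsym : B.IsSymm)
    (hdet : B.det = 1 ∨ B.det = -1)
    (heven : ∀ v : Fin 10 → ℤ, 2 ∣ v ⬝ᵥ B.mulVec v)
    (r s c2 : ℤ) (c1 : Fin 10 → ℤ)
    (hc2 : r + c1 ⬝ᵥ B.mulVec c1 + s = 2 * c2)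
    (hprim : ∀ p : ℕ, p.Prime →
      ¬ ∃ (r' s' : ℤ) (c1' : Fin 10 → ℤ),
        r = (p : ℤ) * r' ∧ s = (p : ℤ) * s' ∧ c1 = (p : ℤ) • c1' ∧
        (2 : ℤ) ∣ (r' + c1' ⬝ᵥ B.mulVec c1' + s'))
    (g : ℤ) (hg : g = gcd r (gcd s (Finset.univ.gcd c1))) :
    (g = 1 ∨ g = 2) ∧ (g = 2 → Odd c2 ∧ (r + s) % 4 = 2) :=
  stmt3_general B heven r s c2 c1 hc2 hprim g hg
end

section
/- With notation as in the gcd lemma: suppose v = r + c₁ - (s/2)ρ is a primitive Mukai vector with r even and c₁ = (r/2)·δ + ξ where δ is a primitive element of the lattice N = H ⊥ (-E₈) and ξ ∈ N. Then gcd(r, ξ, s) equals 1 or 2. -/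
open Matrix

/-- Let `v = r + c₁ - (s/2)ρ` be a primitive Mukai vector on an Enriques surface
(with `N = H²(X,ℤ)_f ≅ H ⊥ (-E₈)` even unimodular of rank `10`), where `r = 2r₀` is
even and `c₁ = r₀·δ + ξ` with `δ ∈ N` primitive and `ξ ∈ N`.  Then `gcd(r, ξ, s)`
equals `1` or `2`. -/
theorem stmt4 (B : Matrix (Fin 10) (Fin 10) ℤ) (hsym : B.IsSymm)
    (hdet : B.det = 1 ∨ B.det = -1)
    (heven : ∀ v : Fin 10 → ℤ, 2 ∣ v ⬝ᵥ B.mulVec v)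
    (r r0 s c2 : ℤ) (hr : r = 2 * r0)
    (δ ξ c1 : Fin 10 → ℤ) (hδ : Finset.univ.gcd δ = 1)
    (hc1 : c1 = r0 • δ + ξ)
    (hc2 : r + c1 ⬝ᵥ B.mulVec c1 + s = 2 * c2)
    (hprim : ∀ p : ℕ, p.Prime →
      ¬ ∃ (r' s' : ℤ) (c1' : Fin 10 → ℤ),
        r = (p : ℤ) * r' ∧ s = (p : ℤ) * s' ∧ c1 = (p : ℤ) • c1' ∧
        (2 : ℤ) ∣ (r' + c1' ⬝ᵥ B.mulVec c1' + s'))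
    (g : ℤ) (hg : g = gcd r (gcd s (Finset.univ.gcd ξ))) :
    g = 1 ∨ g = 2 := by
  -- basic divisibilities
  have hdg_r : g ∣ r := by rw [hg]; exact gcd_dvd_left _ _
  have hdg_s : g ∣ s := by rw [hg]; exact (gcd_dvd_right _ _).trans (gcd_dvd_left _ _)
  have hdg_ξ : ∀ i, g ∣ ξ i := fun i => by
    rw [hg]
    exact ((gcd_dvd_right _ _).trans (gcd_dvd_right _ _)).trans
      (Finset.gcd_dvd (Finset.mem_univ i))
  -- the squared norm of a scalar multiple
  have hQ2 : ∀ (w : Fin 10 → ℤ) (k : ℤ),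
      (k • w) ⬝ᵥ B.mulVec (k • w) = k ^ 2 * (w ⬝ᵥ B.mulVec w) := by
    intro w k
    rw [Matrix.mulVec_smul, smul_dotProduct, dotProduct_smul,
      smul_eq_mul, smul_eq_mul]
    ring
  -- main engine: no prime p can divide r, s and all of c1 in the relevant way
  have main : ∀ p : ℕ, p.Prime → (p:ℤ) ∣ r → (p:ℤ) ∣ s → (∀ i, (p:ℤ) ∣ c1 i) →
      (p ≠ 2 ∨ (p = 2 ∧ (4:ℤ) ∣ r ∧ (4:ℤ) ∣ s)) → False := by
    intro p hp hpr hps hpc hcase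
    obtain ⟨r', hr'⟩ := hpr
    obtain ⟨s', hs'⟩ := hps
    set c1' : Fin 10 → ℤ := fun i => c1 i / p with hc1'def
    have hc1' : c1 = (p:ℤ) • c1' := by
      funext i
      simp only [Pi.smul_apply, smul_eq_mul, hc1'def]
      exact (Int.mul_ediv_cancel' (hpc i)).symm
    obtain ⟨q, hq⟩ := heven c1'
    have hQ : c1 ⬝ᵥ B.mulVec c1 = (p:ℤ) ^ 2 * (2 * q) := by
      rw [hc1', hQ2, hq]
    have hpar : 2 ∣ r' + s' := by
      rcases hcase with hne2 | ⟨hp2, h4r, h4s⟩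
      · have h2 : (2:ℤ) ∣ (p:ℤ) * (r' + s') := by
          refine ⟨c2 - (p:ℤ) ^ 2 * q, ?_⟩
          rw [hr', hs', hQ] at hc2
          ring_nf
          ring_nf at hc2
          linarith
        rcases (Int.prime_two.dvd_mul).mp h2 with h | h
        · exfalso
          have h2p : (2:ℕ) ∣ p := by exact_mod_cast h
          exact hne2 ((Nat.prime_dvd_prime_iff_eq Nat.prime_two hp).mp h2p).symm
        · exact h
      · obtain ⟨a, ha⟩ := h4r
        obtain ⟨b, hb⟩ := h4s
        subst hp2
        push_cast at hr' hs'
        omega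
    refine hprim p hp ⟨r', s', c1', hr', hs', hc1', ?_⟩
    omega
  -- g ≠ 0
  have hne : g ≠ 0 := by
    intro h0
    subst h0
    have hr0 : r = 0 := by simpa using hdg_r
    have hs0 : s = 0 := by simpa using hdg_s
    have hc0 : ∀ i, c1 i = 0 := by
      intro i
      have hξ0 : ξ i = 0 := by simpa using hdg_ξ i
      have : r0 = 0 := by omega
      simp [hc1, this, hξ0]
    exact main 2 Nat.prime_two (by simp [hr0]) (by simp [hs0])
      (fun i => by simp [hc0 i]) (Or.inr ⟨rfl, by simp [hr0], by simp [hs0]⟩)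
  -- 4 does not divide g
  have h4 : ¬ (4:ℤ) ∣ g := by
    intro h4
    have h4r : (4:ℤ) ∣ r := h4.trans hdg_r
    have h4s : (4:ℤ) ∣ s := h4.trans hdg_s
    refine main 2 Nat.prime_two (by push_cast; omega) (by push_cast; omega) ?_
      (Or.inr ⟨rfl, h4r, h4s⟩)
    intro i
    have h4ξ : (4:ℤ) ∣ ξ i := h4.trans (hdg_ξ i)
    have h2r0 : (2:ℤ) ∣ r0 := by omega
    have : c1 i = r0 * δ i + ξ i := by simp [hc1]
    push_cast
    obtain ⟨a, ha⟩ := h2r0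
    obtain ⟨b, hb⟩ := h4ξ
    rw [this, ha, hb]
    ring_nf
    omega
  -- no odd prime divides g
  have hodd : ∀ p : ℕ, p.Prime → p ≠ 2 → ¬ (p:ℤ) ∣ g := by
    intro p hp hne2 hpg
    have hpZ : Prime (p:ℤ) := Nat.prime_iff_prime_int.mp hp
    have hpr : (p:ℤ) ∣ r := hpg.trans hdg_r
    have hps : (p:ℤ) ∣ s := hpg.trans hdg_s
    have hpr0 : (p:ℤ) ∣ r0 := by
      rcases (hpZ.dvd_mul.mp (hr ▸ hpr)) with h | h
      · exfalso
        have h2p : p ∣ 2 := by exact_mod_cast h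
        exact hne2 ((Nat.prime_dvd_prime_iff_eq hp Nat.prime_two).mp h2p)
      · exact h
    refine main p hp hpr hps ?_ (Or.inl hne2)
    intro i
    have : c1 i = r0 * δ i + ξ i := by simp [hc1]
    rw [this]
    exact dvd_add (hpr0.mul_right _) (hpg.trans (hdg_ξ i))
  -- conclude
  have hgnn : 0 ≤ g := by
    rw [hg, ← Int.coe_gcd]
    exact Int.natCast_nonneg _
  set n : ℕ := g.toNat with hn
  have hgn : g = (n : ℤ) := (Int.toNat_of_nonneg hgnn).symm
  by_contra hcon
  push_neg at hcon
  obtain ⟨hg1, hg2⟩ := hcon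
  have hn0 : n ≠ 0 := by omega
  have hn1 : n ≠ 1 := by omega
  obtain ⟨p, hp, hpdvd⟩ := Nat.exists_prime_and_dvd hn1
  have hp2 : p = 2 := by
    by_contra hne2
    exact hodd p hp hne2 (hgn ▸ Int.natCast_dvd_natCast.mpr hpdvd)
  subst hp2
  obtain ⟨m, hm⟩ := hpdvd
  have hm1 : m ≠ 1 := by omega
  have hm0 : m ≠ 0 := by omega
  obtain ⟨q, hq, hqdvd⟩ := Nat.exists_prime_and_dvd hm1
  have hq2 : q = 2 := by
    by_contra hne2
    refine hodd q hq hne2 (hgn ▸ Int.natCast_dvd_natCast.mpr ?_)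
    exact hqdvd.trans ⟨2, by omega⟩
  subst hq2
  obtain ⟨k, hk⟩ := hqdvd
  exact h4 (hgn ▸ ⟨(k:ℤ), by push_cast; omega⟩)
end
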